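/- arXiv:2403.07836 — 6 statements merged into one kernel-verified Lean document; each statement's English description precedes it below -/
import Mathlib

section
/- Let c₁, c₂, c₃, τ be real numbers and H = c₁ X⊗X + c₂ Y⊗Y + c₃ Z⊗Z. Because XX, YY, ZZ mutually commute, the dynamical decoupling by the sequence (I⊗X, X⊗Y, I⊗X, X⊗Y) is exact: the full pulsed evolution satisfies (X⊗Y)·exp(−iτH)·(I⊗X)·exp(−iτH)·(X⊗Y)·exp(−iτH)·(I⊗X)·exp(−iτH) = −(I⊗I), i.e., it equals the 4×4 identity up to the global phase −1, for every real τ. -/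
open Matrix Kronecker NormedSpace

noncomputable section

/-- Pauli X matrix. -/
def PX : Matrix (Fin 2) (Fin 2) ℂ := !![0, 1; 1, 0]
/-- Pauli Y matrix. -/
def PY : Matrix (Fin 2) (Fin 2) ℂ := !![0, -Complex.I; Complex.I, 0]
/-- Pauli Z matrix. -/
def PZ : Matrix (Fin 2) (Fin 2) ℂ := !![1, 0; 0, -1]
/-- 2×2 identity matrix. -/
def PI : Matrix (Fin 2) (Fin 2) ℂ := 1

/-- Two-qubit operators: 4×4 matrices indexed by `Fin 2 × Fin 2`. -/
abbrev Mat4 := Matrix (Fin 2 × Fin 2) (Fin 2 × Fin 2) ℂ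

/-!
The first half of the pulse cycle, `(X⊗Y) U (I⊗X) U` with `U = exp (-iτH)`, already removes the
`YY` and `ZZ` couplings: `I⊗X` commutes with `XX` and anticommutes with `YY` and `ZZ`, so moving
it past `U` flips the signs of those two couplings, and the two evolutions combine (all terms
commute) into `exp (2B)` with `B = -iτc₁ XX`. The half cycle is thus `Q exp (2B)` with
`Q = (X⊗Y)(I⊗X) = X ⊗ YX`. Since `Q` anticommutes with `XX`, the second half echoes the remaining
evolution away: `(Q exp (2B))² = Q (exp (2B) Q exp (2B)) = Q²`, and `Q² = I ⊗ (YX)² = -1`.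
-/

namespace Matrix

section Kronecker

variable {α m n : Type*}

theorem neg_kronecker [Mul α] [HasDistribNeg α] (A : Matrix m m α) (B : Matrix n n α) :
    (-A) ⊗ₖ B = -(A ⊗ₖ B) := by
  ext ⟨i, i'⟩ ⟨j, j'⟩
  simp [neg_mul]

theorem kronecker_neg [Mul α] [HasDistribNeg α] (A : Matrix m m α) (B : Matrix n n α) :
    A ⊗ₖ (-B) = -(A ⊗ₖ B) := by
  ext ⟨i, i'⟩ ⟨j, j'⟩
  simp [mul_neg]

variable [Fintype m] [Fintype n]

theorem semiconjBy_kronecker [CommSemiring α] {P A A' : Matrix m m α} {Q B B' : Matrix n n α}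
    (hA : SemiconjBy P A A') (hB : SemiconjBy Q B B') :
    SemiconjBy (P ⊗ₖ Q) (A ⊗ₖ B) (A' ⊗ₖ B') := by
  rw [SemiconjBy, ← mul_kronecker_mul, ← mul_kronecker_mul, hA.eq, hB.eq]

theorem commute_kronecker_of_anticommute [CommRing α] {A B : Matrix m m α} {C D : Matrix n n α}
    (hAB : SemiconjBy A B (-B)) (hCD : SemiconjBy C D (-D)) :
    Commute (A ⊗ₖ C) (B ⊗ₖ D) := by
  have h := semiconjBy_kronecker hAB hCD
  rwa [neg_kronecker, kronecker_neg, neg_neg] at h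

end Kronecker

section Exponential

variable {m 𝕂 : Type*} [Fintype m] [DecidableEq m] [RCLike 𝕂]

-- Matrices carry no global norm; the Banach-algebra lemmas are applied with the operator norm.

theorem semiconjBy_exp {P A B : Matrix m m 𝕂} (h : SemiconjBy P A B) :
    SemiconjBy P (exp A) (exp B) :=
  open scoped Norms.Operator in h.exp_right

theorem mul_exp_mul_mul_exp_of_semiconjBy_neg {Q B : Matrix m m 𝕂} (h : SemiconjBy Q B (-B)) :
    Q * exp B * (Q * exp B) = Q * Q := by
  have hecho : exp (-(-B)) * Q * exp B = Q :=
    open scoped Norms.Operator in h.exp_neg_mul_mul_exp_eq_self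
  rw [neg_neg] at hecho
  calc Q * exp B * (Q * exp B) = Q * (exp B * Q * exp B) := by simp only [mul_assoc]
    _ = Q * Q := by rw [hecho]

end Exponential

end Matrix

theorem pauliX_semiconjBy_pauliY : SemiconjBy PX PY (-PY) := by simp [SemiconjBy, PX, PY]
theorem pauliX_semiconjBy_pauliZ : SemiconjBy PX PZ (-PZ) := by simp [SemiconjBy, PX, PZ]
theorem pauliY_semiconjBy_pauliX : SemiconjBy PY PX (-PX) := by simp [SemiconjBy, PY, PX]
theorem pauliY_semiconjBy_pauliZ : SemiconjBy PY PZ (-PZ) := by simp [SemiconjBy, PY, PZ]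
theorem pauliI_commute (A : Matrix (Fin 2) (Fin 2) ℂ) : Commute PI A := Commute.one_left A

def heisenberg (a b c : ℂ) : Mat4 := a • (PX ⊗ₖ PX) + b • (PY ⊗ₖ PY) + c • (PZ ⊗ₖ PZ)

theorem semiconjBy_heisenberg {P X' Y' Z' : Mat4} (hX : SemiconjBy P (PX ⊗ₖ PX) X')
    (hY : SemiconjBy P (PY ⊗ₖ PY) Y') (hZ : SemiconjBy P (PZ ⊗ₖ PZ) Z') (a b c : ℂ) :
    SemiconjBy P (heisenberg a b c) (a • X' + b • Y' + c • Z') :=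
  ((hX.smul_right a).add_right (hY.smul_right b)).add_right (hZ.smul_right c)

theorem heisenberg_commute (a b c a' b' c' : ℂ) :
    Commute (heisenberg a b c) (heisenberg a' b' c') := by
  have hXY : Commute (PX ⊗ₖ PX) (PY ⊗ₖ PY) :=
    commute_kronecker_of_anticommute pauliX_semiconjBy_pauliY pauliX_semiconjBy_pauliY
  have hXZ : Commute (PX ⊗ₖ PX) (PZ ⊗ₖ PZ) :=
    commute_kronecker_of_anticommute pauliX_semiconjBy_pauliZ pauliX_semiconjBy_pauliZ
  have hYZ : Commute (PY ⊗ₖ PY) (PZ ⊗ₖ PZ) :=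
    commute_kronecker_of_anticommute pauliY_semiconjBy_pauliZ pauliY_semiconjBy_pauliZ
  have hX : Commute (PX ⊗ₖ PX) (heisenberg a' b' c') :=
    semiconjBy_heisenberg (Commute.refl _) hXY hXZ a' b' c'
  have hY : Commute (PY ⊗ₖ PY) (heisenberg a' b' c') :=
    semiconjBy_heisenberg hXY.symm (Commute.refl _) hYZ a' b' c'
  have hZ : Commute (PZ ⊗ₖ PZ) (heisenberg a' b' c') :=
    semiconjBy_heisenberg hXZ.symm hYZ.symm (Commute.refl _) a' b' c'
  exact ((hX.smul_left a).add_left (hY.smul_left b)).add_left (hZ.smul_left c)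

theorem semiconjBy_IX_heisenberg (a b c : ℂ) :
    SemiconjBy (PI ⊗ₖ PX) (heisenberg a b c) (heisenberg a (-b) (-c)) := by
  have hX : SemiconjBy (PI ⊗ₖ PX) (PX ⊗ₖ PX) (PX ⊗ₖ PX) :=
    semiconjBy_kronecker (pauliI_commute PX) (Commute.refl PX)
  have hY : SemiconjBy (PI ⊗ₖ PX) (PY ⊗ₖ PY) (-(PY ⊗ₖ PY)) := by
    simpa only [kronecker_neg] using
      semiconjBy_kronecker (pauliI_commute PY) pauliX_semiconjBy_pauliY
  have hZ : SemiconjBy (PI ⊗ₖ PX) (PZ ⊗ₖ PZ) (-(PZ ⊗ₖ PZ)) := by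
    simpa only [kronecker_neg] using
      semiconjBy_kronecker (pauliI_commute PZ) pauliX_semiconjBy_pauliZ
  simpa only [heisenberg, smul_neg, neg_smul] using semiconjBy_heisenberg hX hY hZ a b c

theorem exp_heisenberg_mul_IX_mul_exp_heisenberg (a b c : ℂ) :
    exp (heisenberg a b c) * (PI ⊗ₖ PX) * exp (heisenberg a b c)
      = (PI ⊗ₖ PX) * exp ((2 * a) • (PX ⊗ₖ PX)) := by
  have hswap : (PI ⊗ₖ PX) * exp (heisenberg a (-b) (-c))
      = exp (heisenberg a b c) * (PI ⊗ₖ PX) := by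
    simpa only [neg_neg] using (semiconjBy_exp (semiconjBy_IX_heisenberg a (-b) (-c))).eq
  have hsum : heisenberg a (-b) (-c) + heisenberg a b c = (2 * a) • (PX ⊗ₖ PX) := by
    simp only [heisenberg]
    module
  rw [← hswap, mul_assoc, ← exp_add_of_commute _ _ (heisenberg_commute ..), hsum]

theorem XY_mul_IX_semiconjBy_XX :
    SemiconjBy ((PX ⊗ₖ PY) * (PI ⊗ₖ PX)) (PX ⊗ₖ PX) (-(PX ⊗ₖ PX)) := by
  have hXY : SemiconjBy (PX ⊗ₖ PY) (PX ⊗ₖ PX) (-(PX ⊗ₖ PX)) := by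
    simpa only [kronecker_neg] using
      semiconjBy_kronecker (Commute.refl PX) pauliY_semiconjBy_pauliX
  exact hXY.mul_left (semiconjBy_kronecker (pauliI_commute PX) (Commute.refl PX))

theorem XY_mul_IX_mul_self :
    (PX ⊗ₖ PY) * (PI ⊗ₖ PX) * ((PX ⊗ₖ PY) * (PI ⊗ₖ PX)) = -(PI ⊗ₖ PI) := by
  calc _ = (PX * PI * (PX * PI)) ⊗ₖ (PY * PX * (PY * PX)) := by simp only [mul_kronecker_mul]
    _ = 1 ⊗ₖ (-1) := by congr 1 <;> simp [PX, PY, PI, one_fin_two]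
    _ = -(PI ⊗ₖ PI) := by rw [kronecker_neg, PI, one_kronecker_one]

/-- For a Heisenberg-like Hamiltonian `H = c₁ XX + c₂ YY + c₃ ZZ` (whose terms mutually
commute), the DD sequence (I⊗X, X⊗Y, I⊗X, X⊗Y) is exact: the full pulsed evolution equals
the identity up to the global phase −1, for every interval duration τ. -/
theorem exact_decoupling_heisenberg_XX_XYXY
    (c₁ c₂ c₃ τ : ℝ) (H : Mat4)
    (hH : H = (c₁ : ℂ) • (PX ⊗ₖ PX) + (c₂ : ℂ) • (PY ⊗ₖ PY) + (c₃ : ℂ) • (PZ ⊗ₖ PZ)) :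
    (PX ⊗ₖ PY) * exp ((-(Complex.I * (τ : ℂ))) • H) *
      (PI ⊗ₖ PX) * exp ((-(Complex.I * (τ : ℂ))) • H) *
      (PX ⊗ₖ PY) * exp ((-(Complex.I * (τ : ℂ))) • H) *
      (PI ⊗ₖ PX) * exp ((-(Complex.I * (τ : ℂ))) • H) = -(PI ⊗ₖ PI) := by
  set t : ℂ := -(Complex.I * τ)
  have htH : t • H = heisenberg (t * c₁) (t * c₂) (t * c₃) := by
    rw [hH, heisenberg]
    simp only [smul_add, smul_smul]
  rw [htH]
  set U := exp (heisenberg (t * c₁) (t * c₂) (t * c₃))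
  have hhalf : (PX ⊗ₖ PY) * U * (PI ⊗ₖ PX) * U
      = (PX ⊗ₖ PY) * (PI ⊗ₖ PX) * exp ((2 * (t * c₁)) • (PX ⊗ₖ PX)) := by
    conv_rhs => rw [mul_assoc, ← exp_heisenberg_mul_IX_mul_exp_heisenberg _ (t * c₂) (t * c₃)]
    simp only [U, mul_assoc]
  calc _ = (PX ⊗ₖ PY) * U * (PI ⊗ₖ PX) * U * ((PX ⊗ₖ PY) * U * (PI ⊗ₖ PX) * U) := by
        simp only [mul_assoc]
    _ = (PX ⊗ₖ PY) * (PI ⊗ₖ PX) * ((PX ⊗ₖ PY) * (PI ⊗ₖ PX)) := by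
        rw [hhalf]
        refine mul_exp_mul_mul_exp_of_semiconjBy_neg ?_
        simpa only [smul_neg] using XY_mul_IX_semiconjBy_XX.smul_right (2 * (t * c₁))
    _ = -(PI ⊗ₖ PI) := XY_mul_IX_mul_self
end
end

section
/- Let c₁, c₂, c₃, a₁, a₂, b₁, b₂, d₁, d₂ be real numbers and H = c₁ X⊗X + c₂ Y⊗Y + c₃ Z⊗Z + a₁ Z⊗I + a₂ I⊗Z + b₁ Y⊗I + b₂ I⊗Y + d₁ X⊗I + d₂ I⊗X (a Heisenberg interaction together with arbitrary single-qubit terms on both qubits). The twelve-pulse sequence with pulses P₁ = Y⊗Z, P₂ = X⊗Y, P₃ = Y⊗Z, P₄ = Y⊗Z, P₅ = Y⊗Z, P₆ = X⊗Y, P₇ = Y⊗Z, P₈ = Y⊗Z, P₉ = Y⊗Z, P₁₀ = X⊗Y, P₁₁ = Y⊗Z, P₁₂ = X⊗Y applied at equally spaced times decouples H to first order: with toggling frames U₀ = I⊗I and U_l = P_l⋯P₁ for 1 ≤ l ≤ 11, one has ∑_{l=0}^{11} U_l H U_l† = 0. -/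
open Matrix Kronecker NormedSpace

noncomputable section

set_option maxHeartbeats 1000000 in
lemma pprod :
    (PY ⊗ₖ PZ) * (PY ⊗ₖ PZ) = (1 : Mat4) ∧
    (PZ ⊗ₖ PX) * (PZ ⊗ₖ PX) = (1 : Mat4) ∧
    (PX ⊗ₖ PY) * (PX ⊗ₖ PY) = (1 : Mat4) ∧
    (PY ⊗ₖ PZ) * (PZ ⊗ₖ PX) = -(PX ⊗ₖ PY) ∧
    (PZ ⊗ₖ PX) * (PY ⊗ₖ PZ) = -(PX ⊗ₖ PY) ∧
    (PY ⊗ₖ PZ) * (PX ⊗ₖ PY) = -(PZ ⊗ₖ PX) ∧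
    (PX ⊗ₖ PY) * (PY ⊗ₖ PZ) = -(PZ ⊗ₖ PX) ∧
    (PZ ⊗ₖ PX) * (PX ⊗ₖ PY) = -(PY ⊗ₖ PZ) ∧
    (PX ⊗ₖ PY) * (PZ ⊗ₖ PX) = -(PY ⊗ₖ PZ) ∧
    (PY ⊗ₖ PZ)ᴴ = PY ⊗ₖ PZ ∧
    (PZ ⊗ₖ PX)ᴴ = PZ ⊗ₖ PX ∧
    (PX ⊗ₖ PY)ᴴ = PX ⊗ₖ PY ∧
    (PI ⊗ₖ PI) = (1 : Mat4) := by
  refine ⟨?_,?_,?_,?_,?_,?_,?_,?_,?_,?_,?_,?_,?_⟩ <;>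
  · ext ⟨i,j⟩ ⟨k,l⟩
    fin_cases i <;> fin_cases j <;> fin_cases k <;> fin_cases l <;>
      simp [Matrix.mul_apply, Matrix.conjTranspose_apply, Fintype.sum_prod_type,
        Fin.sum_univ_two, kroneckerMap_apply, Matrix.one_apply, PX, PY, PZ, PI, Prod.ext_iff]

set_option maxHeartbeats 4000000 in
/-- The twelve-pulse sequence (π_yπ_z, πₓπ_y, π_yπ_z, π_yπ_z, π_yπ_z, πₓπ_y, π_yπ_z, π_yπ_z,
π_yπ_z, πₓπ_y, π_yπ_z, πₓπ_y) decouples the Heisenberg interaction together with arbitrary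
single-qubit terms on both qubits to first order. -/
theorem twelve_pulse_decouples_heisenberg_with_all_single_qubit_terms
    (c₁ c₂ c₃ a₁ a₂ b₁ b₂ d₁ d₂ : ℝ) (H : Mat4)
    (hH : H = (c₁ : ℂ) • (PX ⊗ₖ PX) + (c₂ : ℂ) • (PY ⊗ₖ PY) + (c₃ : ℂ) • (PZ ⊗ₖ PZ)
          + (a₁ : ℂ) • (PZ ⊗ₖ PI) + (a₂ : ℂ) • (PI ⊗ₖ PZ)
          + (b₁ : ℂ) • (PY ⊗ₖ PI) + (b₂ : ℂ) • (PI ⊗ₖ PY)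
          + (d₁ : ℂ) • (PX ⊗ₖ PI) + (d₂ : ℂ) • (PI ⊗ₖ PX))
    (P₁ P₂ P₃ P₄ P₅ P₆ P₇ P₈ P₉ P₁₀ P₁₁ P₁₂ : Mat4)
    (U₀ U₁ U₂ U₃ U₄ U₅ U₆ U₇ U₈ U₉ U₁₀ U₁₁ : Mat4)
    (hP₁ : P₁ = PY ⊗ₖ PZ) (hP₂ : P₂ = PX ⊗ₖ PY) (hP₃ : P₃ = PY ⊗ₖ PZ) (hP₄ : P₄ = PY ⊗ₖ PZ)
    (hP₅ : P₅ = PY ⊗ₖ PZ) (hP₆ : P₆ = PX ⊗ₖ PY) (hP₇ : P₇ = PY ⊗ₖ PZ) (hP₈ : P₈ = PY ⊗ₖ PZ)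
    (hP₉ : P₉ = PY ⊗ₖ PZ) (hP₁₀ : P₁₀ = PX ⊗ₖ PY) (hP₁₁ : P₁₁ = PY ⊗ₖ PZ) (hP₁₂ : P₁₂ = PX ⊗ₖ PY)
    (hU₀ : U₀ = PI ⊗ₖ PI) (hU₁ : U₁ = P₁) (hU₂ : U₂ = P₂ * P₁) (hU₃ : U₃ = P₃ * P₂ * P₁)
    (hU₄ : U₄ = P₄ * P₃ * P₂ * P₁) (hU₅ : U₅ = P₅ * P₄ * P₃ * P₂ * P₁)
    (hU₆ : U₆ = P₆ * P₅ * P₄ * P₃ * P₂ * P₁) (hU₇ : U₇ = P₇ * P₆ * P₅ * P₄ * P₃ * P₂ * P₁)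
    (hU₈ : U₈ = P₈ * P₇ * P₆ * P₅ * P₄ * P₃ * P₂ * P₁)
    (hU₉ : U₉ = P₉ * P₈ * P₇ * P₆ * P₅ * P₄ * P₃ * P₂ * P₁)
    (hU₁₀ : U₁₀ = P₁₀ * P₉ * P₈ * P₇ * P₆ * P₅ * P₄ * P₃ * P₂ * P₁)
    (hU₁₁ : U₁₁ = P₁₁ * P₁₀ * P₉ * P₈ * P₇ * P₆ * P₅ * P₄ * P₃ * P₂ * P₁) :
    U₀ * H * U₀ᴴ + U₁ * H * U₁ᴴ + U₂ * H * U₂ᴴ + U₃ * H * U₃ᴴ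
      + U₄ * H * U₄ᴴ + U₅ * H * U₅ᴴ + U₆ * H * U₆ᴴ + U₇ * H * U₇ᴴ
      + U₈ * H * U₈ᴴ + U₉ * H * U₉ᴴ + U₁₀ * H * U₁₀ᴴ + U₁₁ * H * U₁₁ᴴ = 0 := by
  
  obtain ⟨q1,q2,q3,q4,q5,q6,q7,q8,q9,h1,h2,h3,h0⟩ := pprod
  subst hP₁ hP₂ hP₃ hP₄ hP₅ hP₆ hP₇ hP₈ hP₉ hP₁₀ hP₁₁ hP₁₂
  subst hU₀ hU₁ hU₂ hU₃ hU₄ hU₅ hU₆ hU₇ hU₈ hU₉ hU₁₀ hU₁₁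
  simp only [q1,q2,q3,q4,q5,q6,q7,q8,q9,h0, neg_mul, mul_neg, neg_neg, one_mul, mul_one,
    Matrix.conjTranspose_neg, Matrix.conjTranspose_one, h1,h2,h3]
  subst hH
  ext ⟨i,j⟩ ⟨k,l⟩
  fin_cases i <;> fin_cases j <;> fin_cases k <;> fin_cases l <;>
    simp [Matrix.mul_apply, Matrix.add_apply, Matrix.smul_apply, Matrix.neg_apply,
      Fintype.sum_prod_type, Fin.sum_univ_two, kroneckerMap_apply, Matrix.one_apply,
      smul_eq_mul, PX, PY, PZ, PI, Prod.ext_iff] <;> ring_nf <;>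
    simp [Complex.I_sq] <;> ring_nf
end
end

section
/- Let J, a, b, τ be real numbers and H = J Z⊗Z + a Z⊗I + b I⊗Z. The time-shifted syncopated decoupling scheme (XX-CPMG, XX) — X pulses on qubit 0 after the first and third quarter-interval and X pulses on qubit 1 after the second and fourth — refocuses this Hamiltonian exactly: (I⊗X)·exp(−iτH)·(X⊗I)·exp(−iτH)·(I⊗X)·exp(−iτH)·(X⊗I)·exp(−iτH) = I⊗I, the 4×4 identity matrix, for every real τ. Thus both the ZZ crosstalk and single-qubit dephasing on both qubits are exactly eliminated. -/
open Matrix Kronecker NormedSpace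

noncomputable section

/-!
Conjugating by `X` on one qubit flips the sign of every `Z` on that qubit, so each pulse can be
pushed through the free evolution to its right at the cost of flipping the signs of `(J, a, b)`
to `(-J, -a, b)` or `(-J, a, -b)`. Pushing all four pulses to the end leaves four evolutions
under Hamiltonians of the same diagonal family, which commute, and whose sign patterns add up
to zero; the four pulses themselves multiply to the identity.
-/
theorem Matrix.mul_exp_of_mul_self_eq_one {m 𝔸 : Type*} [Fintype m] [DecidableEq m]
    [NormedRing 𝔸] [NormedAlgebra ℚ 𝔸] [CompleteSpace 𝔸] {U : Matrix m m 𝔸} (hU : U * U = 1)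
    (A : Matrix m m 𝔸) : U * exp A = exp (U * A * U) * U := by
  have := Matrix.exp_units_conj ⟨U, U, hU, hU⟩ A
  simp only [Units.inv_mk] at this
  rw [this, mul_assoc _ U, hU, mul_one]

def zzHamiltonian (J a b : ℂ) : Mat4 :=
  J • (PZ ⊗ₖ PZ) + a • (PZ ⊗ₖ PI) + b • (PI ⊗ₖ PZ)

theorem PX_mul_PX : PX * PX = 1 := by
  ext i j; fin_cases i <;> fin_cases j <;> simp [PX]

theorem PX_mul_PZ_mul_PX : PX * PZ * PX = (-1 : ℂ) • PZ := by
  ext i j; fin_cases i <;> fin_cases j <;> simp [PX, PZ]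

theorem PZ_eq_diagonal : PZ = diagonal ![1, -1] := by
  ext i j; fin_cases i <;> fin_cases j <;> simp [PZ]

theorem zzHamiltonian_isDiag (J a b : ℂ) : (zzHamiltonian J a b).IsDiag := by
  simp only [zzHamiltonian, PZ_eq_diagonal, PI, ← diagonal_one, diagonal_kronecker_diagonal]
  exact (((isDiag_diagonal _).smul J).add ((isDiag_diagonal _).smul a)).add
    ((isDiag_diagonal _).smul b)

theorem zzHamiltonian_commute (J a b J' a' b' : ℂ) :
    Commute (zzHamiltonian J a b) (zzHamiltonian J' a' b') := by
  rw [← (zzHamiltonian_isDiag J a b).diagonal_diag,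
    ← (zzHamiltonian_isDiag J' a' b').diagonal_diag]
  exact commute_diagonal _ _

theorem zzHamiltonian_add (J a b J' a' b' : ℂ) :
    zzHamiltonian J a b + zzHamiltonian J' a' b' = zzHamiltonian (J + J') (a + a') (b + b') := by
  simp only [zzHamiltonian, add_smul]; abel

theorem smul_zzHamiltonian (c J a b : ℂ) :
    c • zzHamiltonian J a b = zzHamiltonian (c * J) (c * a) (c * b) := by
  simp only [zzHamiltonian, smul_add, smul_smul]

theorem zzHamiltonian_zero : zzHamiltonian 0 0 0 = 0 := by
  simp only [zzHamiltonian, zero_smul, add_zero]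

theorem exp_zzHamiltonian_mul_exp_zzHamiltonian (J a b J' a' b' : ℂ) :
    exp (zzHamiltonian J a b) * exp (zzHamiltonian J' a' b') =
      exp (zzHamiltonian (J + J') (a + a') (b + b')) := by
  rw [← zzHamiltonian_add, Matrix.exp_add_of_commute _ _ (zzHamiltonian_commute ..)]

theorem PX_kronecker_PI_mul_self : (PX ⊗ₖ PI) * (PX ⊗ₖ PI) = 1 := by
  rw [← mul_kronecker_mul, PX_mul_PX, PI, mul_one, one_kronecker_one]

theorem PI_kronecker_PX_mul_self : (PI ⊗ₖ PX) * (PI ⊗ₖ PX) = 1 := by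
  rw [← mul_kronecker_mul, PX_mul_PX, PI, mul_one, one_kronecker_one]

theorem PX_kronecker_PI_conj_zzHamiltonian (J a b : ℂ) :
    (PX ⊗ₖ PI) * zzHamiltonian J a b * (PX ⊗ₖ PI) = zzHamiltonian (-J) (-a) b := by
  simp only [zzHamiltonian, mul_add, add_mul, mul_smul_comm, smul_mul_assoc, ← mul_kronecker_mul,
    PX_mul_PX, PX_mul_PZ_mul_PX, PI, mul_one, one_mul, smul_kronecker, smul_smul, mul_neg_one]

theorem PI_kronecker_PX_conj_zzHamiltonian (J a b : ℂ) :
    (PI ⊗ₖ PX) * zzHamiltonian J a b * (PI ⊗ₖ PX) = zzHamiltonian (-J) a (-b) := by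
  simp only [zzHamiltonian, mul_add, add_mul, mul_smul_comm, smul_mul_assoc, ← mul_kronecker_mul,
    PX_mul_PX, PX_mul_PZ_mul_PX, PI, mul_one, one_mul, kronecker_smul, smul_smul, mul_neg_one]

theorem PX_kronecker_PI_mul_exp_zzHamiltonian (J a b : ℂ) (M : Mat4) :
    (PX ⊗ₖ PI) * (exp (zzHamiltonian J a b) * M) =
      exp (zzHamiltonian (-J) (-a) b) * ((PX ⊗ₖ PI) * M) := by
  rw [← mul_assoc, mul_exp_of_mul_self_eq_one PX_kronecker_PI_mul_self,
    PX_kronecker_PI_conj_zzHamiltonian, mul_assoc]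

theorem PI_kronecker_PX_mul_exp_zzHamiltonian (J a b : ℂ) (M : Mat4) :
    (PI ⊗ₖ PX) * (exp (zzHamiltonian J a b) * M) =
      exp (zzHamiltonian (-J) a (-b)) * ((PI ⊗ₖ PX) * M) := by
  rw [← mul_assoc, mul_exp_of_mul_self_eq_one PI_kronecker_PX_mul_self,
    PI_kronecker_PX_conj_zzHamiltonian, mul_assoc]

theorem syncopation_pulse_word_eq_one :
    (PI ⊗ₖ PX) * ((PX ⊗ₖ PI) * ((PI ⊗ₖ PX) * (PX ⊗ₖ PI))) = 1 := by
  simp only [← mul_kronecker_mul, mul_one, PI, one_mul, PX_mul_PX, one_kronecker_one]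

theorem syncopated_cycle_eq_one (J a b : ℂ) :
    (PI ⊗ₖ PX) * exp (zzHamiltonian J a b) * (PX ⊗ₖ PI) * exp (zzHamiltonian J a b) *
      (PI ⊗ₖ PX) * exp (zzHamiltonian J a b) * (PX ⊗ₖ PI) * exp (zzHamiltonian J a b) = 1 := by
  refine (mul_one _).symm.trans ?_
  simp only [mul_assoc, PX_kronecker_PI_mul_exp_zzHamiltonian,
    PI_kronecker_PX_mul_exp_zzHamiltonian]
  rw [mul_one, syncopation_pulse_word_eq_one, mul_one]
  simp only [exp_zzHamiltonian_mul_exp_zzHamiltonian]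
  ring_nf
  rw [zzHamiltonian_zero, exp_zero]

/-- The time-shifted syncopated scheme (XX-CPMG, XX) exactly refocuses
`H = J Z⊗Z + a Z⊗I + b I⊗Z`: the full pulsed evolution is the 4×4 identity for every τ. -/
theorem shifted_syncopation_exactly_refocuses_ZZ_and_dephasing
    (J a b τ : ℝ) (H : Mat4)
    (hH : H = (J : ℂ) • (PZ ⊗ₖ PZ) + (a : ℂ) • (PZ ⊗ₖ PI) + (b : ℂ) • (PI ⊗ₖ PZ)) :
    (PI ⊗ₖ PX) * exp ((-(Complex.I * (τ : ℂ))) • H) *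
      (PX ⊗ₖ PI) * exp ((-(Complex.I * (τ : ℂ))) • H) *
      (PI ⊗ₖ PX) * exp ((-(Complex.I * (τ : ℂ))) • H) *
      (PX ⊗ₖ PI) * exp ((-(Complex.I * (τ : ℂ))) • H) = PI ⊗ₖ PI := by
  have hH' : H = zzHamiltonian J a b := hH
  rw [hH', smul_zzHamiltonian, syncopated_cycle_eq_one, PI, one_kronecker_one]
end
end

section
/- Let J, a, b, τ be real numbers and H = J Z⊗Z + a Z⊗I + b I⊗Z. The frequency-doubling syncopated decoupling scheme (XX, XXXX) — X pulses on qubit 1 after every quarter-interval and X pulses on qubit 0 after the second and fourth quarter-intervals, i.e., combined pulses I⊗X, X⊗X, I⊗X, X⊗X in time order — refocuses this Hamiltonian exactly: (X⊗X)·exp(−iτH)·(I⊗X)·exp(−iτH)·(X⊗X)·exp(−iτH)·(I⊗X)·exp(−iτH) = I⊗I, the 4×4 identity matrix, for every real τ. -/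
open Matrix Kronecker NormedSpace

noncomputable section

/-!
Conjugating a free evolution by an involutive pulse `U` gives `exp (-iτ UHU)`, so the pulse
sequence equals the product of the evolutions under `H` conjugated by the accumulated pulses
`X⊗X`, `X⊗I`, `I⊗X` and `I⊗I` (the toggling frame). Conjugation by `X` on a qubit flips the sign
of `Z` on that qubit, and over these four frames each of `Z⊗Z`, `Z⊗I`, `I⊗Z` appears twice with
each sign. All four conjugated Hamiltonians are diagonal, hence commute, so the product is the
exponential of their sum, which is `0`.
-/

theorem Matrix.exp_conj_of_mul_self_eq_one {m 𝔸 : Type*} [Fintype m] [DecidableEq m]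
    [NormedRing 𝔸] [NormedAlgebra ℚ 𝔸] [CompleteSpace 𝔸] {U : Matrix m m 𝔸}
    (hU : U * U = 1) (A : Matrix m m 𝔸) : U * exp A * U = exp (U * A * U) :=
  (exp_units_conj ⟨U, U, hU, hU⟩ A).symm

section Kronecker

variable {l m R : Type*} [Fintype l] [Fintype m] [CommSemiring R]

theorem Commute.kronecker {A C : Matrix l l R} {B D : Matrix m m R} (hAC : Commute A C)
    (hBD : Commute B D) : Commute (A ⊗ₖ B) (C ⊗ₖ D) := by
  rw [Commute, SemiconjBy, ← mul_kronecker_mul, ← mul_kronecker_mul, hAC.eq, hBD.eq]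

theorem Matrix.kronecker_mul_self_eq_one [DecidableEq l] [DecidableEq m] {U : Matrix l l R}
    {V : Matrix m m R} (hU : U * U = 1) (hV : V * V = 1) : (U ⊗ₖ V) * (U ⊗ₖ V) = 1 := by
  rw [← mul_kronecker_mul, hU, hV, one_kronecker_one]

end Kronecker

theorem toggling_frame {M : Type*} [Monoid M] {P Q : M} (hP : P * P = 1) (hQ : Q * Q = 1)
    (e : M) :
    P * e * Q * e * P * e * Q * e = (P * e * P) * (P * Q * e * (P * Q)) * (Q * e * Q) * e := by
  have hP' (x : M) : P * (P * x) = x := by rw [← mul_assoc, hP, one_mul]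
  have hQ' (x : M) : Q * (Q * x) = x := by rw [← mul_assoc, hQ, one_mul]
  simp only [mul_assoc, hP', hQ']

theorem PI_mul_PI : PI * PI = 1 := mul_one 1

theorem PI_mul_PZ_mul_PI : PI * PZ * PI = (1 : ℂ) • PZ := by
  rw [PI, mul_one, one_mul, one_smul]

def zzDephasing (J a b : ℂ) : Mat4 := J • (PZ ⊗ₖ PZ) + a • (PZ ⊗ₖ PI) + b • (PI ⊗ₖ PZ)

theorem commute_zzDephasing (J a b J' a' b' : ℂ) :
    Commute (zzDephasing J a b) (zzDephasing J' a' b') := by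
  unfold zzDephasing
  refine .add_left (.add_left ?_ ?_) ?_ <;> refine .add_right (.add_right ?_ ?_) ?_ <;>
    refine .smul_left (.smul_right (.kronecker ?_ ?_) _) _ <;>
    first | exact .refl _ | exact .one_left _ | exact .one_right _

theorem exp_smul_zzDephasing_mul_exp_smul_zzDephasing (c J a b J' a' b' : ℂ) :
    exp (c • zzDephasing J a b) * exp (c • zzDephasing J' a' b') =
      exp (c • zzDephasing (J + J') (a + a') (b + b')) := by
  rw [← Matrix.exp_add_of_commute _ _
    (((commute_zzDephasing J a b J' a' b').smul_left c).smul_right c)]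
  congr 1
  simp only [zzDephasing]
  module

theorem kronecker_mul_zzDephasing_mul_kronecker {U V : Matrix (Fin 2) (Fin 2) ℂ} {u v : ℂ}
    (hU : U * U = 1) (hV : V * V = 1) (hUZ : U * PZ * U = u • PZ) (hVZ : V * PZ * V = v • PZ)
    (J a b : ℂ) :
    (U ⊗ₖ V) * zzDephasing J a b * (U ⊗ₖ V) = zzDephasing (u * v * J) (u * a) (v * b) := by
  have hI {W : Matrix (Fin 2) (Fin 2) ℂ} (hW : W * W = 1) : W * PI * W = PI := by
    rw [PI, mul_one, hW]
  simp only [zzDephasing, Matrix.mul_add, Matrix.add_mul, Matrix.mul_smul, Matrix.smul_mul,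
    ← mul_kronecker_mul, hUZ, hVZ, hI hU, hI hV, smul_kronecker, kronecker_smul, smul_smul]
  ring_nf

theorem kronecker_mul_exp_smul_zzDephasing_mul_kronecker {U V : Matrix (Fin 2) (Fin 2) ℂ}
    {u v : ℂ} (hU : U * U = 1) (hV : V * V = 1) (hUZ : U * PZ * U = u • PZ)
    (hVZ : V * PZ * V = v • PZ) (c J a b : ℂ) :
    (U ⊗ₖ V) * exp (c • zzDephasing J a b) * (U ⊗ₖ V) =
      exp (c • zzDephasing (u * v * J) (u * a) (v * b)) := by
  rw [Matrix.exp_conj_of_mul_self_eq_one (Matrix.kronecker_mul_self_eq_one hU hV),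
    Matrix.mul_smul, Matrix.smul_mul, kronecker_mul_zzDephasing_mul_kronecker hU hV hUZ hVZ]

/-- The frequency-doubling syncopated scheme (XX, XXXX), with combined pulses
I⊗X, X⊗X, I⊗X, X⊗X in time order, exactly refocuses `H = J Z⊗Z + a Z⊗I + b I⊗Z`. -/
theorem frequency_doubling_syncopation_exactly_refocuses_ZZ_and_dephasing
    (J a b τ : ℝ) (H : Mat4)
    (hH : H = (J : ℂ) • (PZ ⊗ₖ PZ) + (a : ℂ) • (PZ ⊗ₖ PI) + (b : ℂ) • (PI ⊗ₖ PZ)) :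
    (PX ⊗ₖ PX) * exp ((-(Complex.I * (τ : ℂ))) • H) *
      (PI ⊗ₖ PX) * exp ((-(Complex.I * (τ : ℂ))) • H) *
      (PX ⊗ₖ PX) * exp ((-(Complex.I * (τ : ℂ))) • H) *
      (PI ⊗ₖ PX) * exp ((-(Complex.I * (τ : ℂ))) • H) = PI ⊗ₖ PI := by
  obtain rfl : H = zzDephasing J a b := hH
  have hXX_mul_IX : (PX ⊗ₖ PX) * (PI ⊗ₖ PX) = PX ⊗ₖ PI := by
    rw [← mul_kronecker_mul, PX_mul_PX, PI, mul_one]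
  have hX := PX_mul_PX
  have hI := PI_mul_PI
  have hXZ := PX_mul_PZ_mul_PX
  have hIZ := PI_mul_PZ_mul_PI
  rw [toggling_frame (Matrix.kronecker_mul_self_eq_one hX hX)
      (Matrix.kronecker_mul_self_eq_one hI hX), hXX_mul_IX,
    kronecker_mul_exp_smul_zzDephasing_mul_kronecker hX hX hXZ hXZ,
    kronecker_mul_exp_smul_zzDephasing_mul_kronecker hX hI hXZ hIZ,
    kronecker_mul_exp_smul_zzDephasing_mul_kronecker hI hX hIZ hXZ,
    exp_smul_zzDephasing_mul_exp_smul_zzDephasing, exp_smul_zzDephasing_mul_exp_smul_zzDephasing,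
    exp_smul_zzDephasing_mul_exp_smul_zzDephasing, PI, one_kronecker_one]
  refine (congrArg exp ?_).trans exp_zero
  simp only [zzDephasing]
  module
end
end

section
/- Consider the frequency-doubling syncopated scheme (XX, XXXX), whose toggling frames over the four equal quarter-intervals are U₀ = I⊗I, U₁ = I⊗X, U₂ = X⊗I, U₃ = X⊗X. Then for all real c₁, c₂, c₃, a, b and H = c₁ (X⊗Y − Y⊗X) + c₂ Y⊗Y + c₃ Z⊗Z + a Z⊗I + b I⊗Z, the first-order average Hamiltonian vanishes: ∑_{l=0}^{3} U_l H U_l† = 0. In particular this scheme decouples crosstalk of the form XY − YX (as arises in tunable-coupler architectures) as well as ZZ crosstalk and single-qubit dephasing. -/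
open Matrix Kronecker NormedSpace

noncomputable section

set_option maxHeartbeats 4000000 in
/-- The frequency-doubling syncopated scheme (XX, XXXX), with toggling frames
I⊗I, I⊗X, X⊗I, X⊗X over four equal quarter-intervals, decouples crosstalk of the form
XY − YX (as in tunable-coupler architectures) as well as YY and ZZ crosstalk and
single-qubit dephasing to first order. -/
theorem frequency_doubling_decouples_XYmYX_YY_ZZ_dephasing
    (c₁ c₂ c₃ a b : ℝ) (H : Mat4)
    (hH : H = (c₁ : ℂ) • (PX ⊗ₖ PY - PY ⊗ₖ PX) + (c₂ : ℂ) • (PY ⊗ₖ PY)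
          + (c₃ : ℂ) • (PZ ⊗ₖ PZ) + (a : ℂ) • (PZ ⊗ₖ PI) + (b : ℂ) • (PI ⊗ₖ PZ))
    (U₀ U₁ U₂ U₃ : Mat4)
    (hU₀ : U₀ = PI ⊗ₖ PI) (hU₁ : U₁ = PI ⊗ₖ PX) (hU₂ : U₂ = PX ⊗ₖ PI) (hU₃ : U₃ = PX ⊗ₖ PX) :
    U₀ * H * U₀ᴴ + U₁ * H * U₁ᴴ + U₂ * H * U₂ᴴ + U₃ * H * U₃ᴴ = 0 := by
  subst hH hU₀ hU₁ hU₂ hU₃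
  ext ⟨i,j⟩ ⟨k,l⟩
  simp only [PX, PY, PZ, PI, Matrix.kroneckerMap_apply, Matrix.add_apply, Matrix.sub_apply,
    Matrix.smul_apply, Matrix.mul_apply, Matrix.conjTranspose_apply, Matrix.one_apply,
    Matrix.zero_apply, Fintype.sum_prod_type, Fin.sum_univ_two, smul_eq_mul]
  fin_cases i <;> fin_cases j <;> fin_cases k <;> fin_cases l <;>
    simp [Matrix.cons_val_zero, Matrix.cons_val_one, Matrix.head_cons] <;> ring
end
end

section
/- Consider the sequence (XXXX, YXYX) with pulses P₁ = X⊗Y, P₂ = X⊗X, P₃ = X⊗Y, P₄ = X⊗X applied at equally spaced times, with toggling frames U₀ = I⊗I, U₁ = P₁, U₂ = P₂P₁, U₃ = P₃P₂P₁. Then for all real c₁, c₂, c₃, c₄, a, b and H = c₁ X⊗X + c₂ Y⊗Y + c₃ X⊗Y + c₄ Y⊗X + a Z⊗I + b I⊗Z, the first-order average Hamiltonian vanishes: ∑_{l=0}^{3} U_l H U_l† = 0. In particular this single sequence simultaneously decouples crosstalk of both forms XX + YY and XY − YX, together with single-qubit dephasing on both qubits. -/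
open Matrix Kronecker NormedSpace

noncomputable section

section Aux

private lemma kron_conjT (A B : Matrix (Fin 2) (Fin 2) ℂ) :
    (A ⊗ₖ B)ᴴ = Aᴴ ⊗ₖ Bᴴ := by
  ext ⟨i, i'⟩ ⟨j, j'⟩
  simp [Matrix.conjTranspose_apply, Matrix.kroneckerMap_apply]

private lemma conj_kron (A B C D : Matrix (Fin 2) (Fin 2) ℂ) :
    (A ⊗ₖ B) * (C ⊗ₖ D) * (A ⊗ₖ B)ᴴ = (A * C * Aᴴ) ⊗ₖ (B * D * Bᴴ) := by
  rw [kron_conjT, ← Matrix.mul_kronecker_mul, ← Matrix.mul_kronecker_mul]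

private lemma neg_kron (A B : Matrix (Fin 2) (Fin 2) ℂ) :
    (-A) ⊗ₖ B = -(A ⊗ₖ B) := by
  ext ⟨i, i'⟩ ⟨j, j'⟩; simp [Matrix.kroneckerMap_apply]

private lemma kron_neg (A B : Matrix (Fin 2) (Fin 2) ℂ) :
    A ⊗ₖ (-B) = -(A ⊗ₖ B) := by
  ext ⟨i, i'⟩ ⟨j, j'⟩; simp [Matrix.kroneckerMap_apply]

private lemma cI (M : Matrix (Fin 2) (Fin 2) ℂ) : PI * M * PIᴴ = M := by
  simp [PI]

private def PQ : Matrix (Fin 2) (Fin 2) ℂ := !![Complex.I, 0; 0, -Complex.I]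
private def PR : Matrix (Fin 2) (Fin 2) ℂ := !![0, -1; -1, 0]

private lemma cXX : PX * PX * PXᴴ = PX := by
  ext i j; fin_cases i <;> fin_cases j <;>
    simp [PX, Matrix.mul_apply, Matrix.conjTranspose_apply, Fin.sum_univ_two]
private lemma cXY : PX * PY * PXᴴ = -PY := by
  ext i j; fin_cases i <;> fin_cases j <;>
    simp [PX, PY, Matrix.mul_apply, Matrix.conjTranspose_apply, Fin.sum_univ_two]
private lemma cXZ : PX * PZ * PXᴴ = -PZ := by
  ext i j; fin_cases i <;> fin_cases j <;>
    simp [PX, PZ, Matrix.mul_apply, Matrix.conjTranspose_apply, Fin.sum_univ_two]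
private lemma cXI : PX * PI * PXᴴ = PI := by
  ext i j; fin_cases i <;> fin_cases j <;>
    simp [PX, PI, Matrix.mul_apply, Matrix.conjTranspose_apply, Fin.sum_univ_two,
      Matrix.one_apply]
private lemma cYX : PY * PX * PYᴴ = -PX := by
  ext i j; fin_cases i <;> fin_cases j <;>
    simp [PX, PY, Matrix.mul_apply, Matrix.conjTranspose_apply, Fin.sum_univ_two]
private lemma cYY : PY * PY * PYᴴ = PY := by
  ext i j; fin_cases i <;> fin_cases j <;>
    simp [PY, Matrix.mul_apply, Matrix.conjTranspose_apply, Fin.sum_univ_two]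
private lemma cYZ : PY * PZ * PYᴴ = -PZ := by
  ext i j; fin_cases i <;> fin_cases j <;>
    simp [PY, PZ, Matrix.mul_apply, Matrix.conjTranspose_apply, Fin.sum_univ_two]
private lemma cYI : PY * PI * PYᴴ = PI := by
  ext i j; fin_cases i <;> fin_cases j <;>
    simp [PY, PI, Matrix.mul_apply, Matrix.conjTranspose_apply, Fin.sum_univ_two,
      Matrix.one_apply]
private lemma cQX : PQ * PX * PQᴴ = -PX := by
  ext i j; fin_cases i <;> fin_cases j <;>
    simp [PQ, PX, Matrix.mul_apply, Matrix.conjTranspose_apply, Fin.sum_univ_two]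
private lemma cQY : PQ * PY * PQᴴ = -PY := by
  ext i j; fin_cases i <;> fin_cases j <;>
    simp [PQ, PY, Matrix.mul_apply, Matrix.conjTranspose_apply, Fin.sum_univ_two]
private lemma cQZ : PQ * PZ * PQᴴ = PZ := by
  ext i j; fin_cases i <;> fin_cases j <;>
    simp [PQ, PZ, Matrix.mul_apply, Matrix.conjTranspose_apply, Fin.sum_univ_two]
private lemma cQI : PQ * PI * PQᴴ = PI := by
  ext i j; fin_cases i <;> fin_cases j <;>
    simp [PQ, PI, Matrix.mul_apply, Matrix.conjTranspose_apply, Fin.sum_univ_two,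
      Matrix.one_apply]
private lemma cRX : PR * PX * PRᴴ = PX := by
  ext i j; fin_cases i <;> fin_cases j <;>
    simp [PR, PX, Matrix.mul_apply, Matrix.conjTranspose_apply, Fin.sum_univ_two]
private lemma cRY : PR * PY * PRᴴ = -PY := by
  ext i j; fin_cases i <;> fin_cases j <;>
    simp [PR, PY, Matrix.mul_apply, Matrix.conjTranspose_apply, Fin.sum_univ_two]
private lemma cRZ : PR * PZ * PRᴴ = -PZ := by
  ext i j; fin_cases i <;> fin_cases j <;>
    simp [PR, PZ, Matrix.mul_apply, Matrix.conjTranspose_apply, Fin.sum_univ_two]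
private lemma cRI : PR * PI * PRᴴ = PI := by
  ext i j; fin_cases i <;> fin_cases j <;>
    simp [PR, PI, Matrix.mul_apply, Matrix.conjTranspose_apply, Fin.sum_univ_two,
      Matrix.one_apply]

end Aux

/-- The sequence (XXXX, YXYX), with pulses X⊗Y, X⊗X, X⊗Y, X⊗X at equally spaced times,
decouples crosstalk of both forms XX + YY and XY − YX (arbitrary combinations
c₁ XX + c₂ YY + c₃ XY + c₄ YX), together with single-qubit dephasing, to first order. -/
theorem XXXX_YXYX_decouples_XX_YY_XY_YX_and_dephasing
    (c₁ c₂ c₃ c₄ a b : ℝ) (H : Mat4)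
    (hH : H = (c₁ : ℂ) • (PX ⊗ₖ PX) + (c₂ : ℂ) • (PY ⊗ₖ PY)
          + (c₃ : ℂ) • (PX ⊗ₖ PY) + (c₄ : ℂ) • (PY ⊗ₖ PX)
          + (a : ℂ) • (PZ ⊗ₖ PI) + (b : ℂ) • (PI ⊗ₖ PZ))
    (P₁ P₂ P₃ P₄ U₀ U₁ U₂ U₃ : Mat4)
    (hP₁ : P₁ = PX ⊗ₖ PY) (hP₂ : P₂ = PX ⊗ₖ PX)
    (hP₃ : P₃ = PX ⊗ₖ PY) (hP₄ : P₄ = PX ⊗ₖ PX)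
    (hU₀ : U₀ = PI ⊗ₖ PI) (hU₁ : U₁ = P₁) (hU₂ : U₂ = P₂ * P₁) (hU₃ : U₃ = P₃ * P₂ * P₁) :
    U₀ * H * U₀ᴴ + U₁ * H * U₁ᴴ + U₂ * H * U₂ᴴ + U₃ * H * U₃ᴴ = 0 := by
  have e2 : (PX ⊗ₖ PX) * (PX ⊗ₖ PY) = PI ⊗ₖ PQ := by
    rw [← Matrix.mul_kronecker_mul]
    congr 1 <;> (ext i j; fin_cases i <;> fin_cases j <;>
      simp [PX, PY, PI, PQ, Matrix.mul_apply, Fin.sum_univ_two, Matrix.one_apply])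
  have e3 : (PX ⊗ₖ PY) * (PX ⊗ₖ PX) * (PX ⊗ₖ PY) = PX ⊗ₖ PR := by
    rw [← Matrix.mul_kronecker_mul, ← Matrix.mul_kronecker_mul]
    congr 1 <;> (ext i j; fin_cases i <;> fin_cases j <;>
      simp [PX, PY, PR, Matrix.mul_apply, Fin.sum_univ_two])
  subst hH hP₁ hP₂ hP₃ hP₄ hU₀ hU₁ hU₂ hU₃
  rw [e2, e3]
  simp only [mul_add, add_mul, Matrix.mul_smul, Matrix.smul_mul, conj_kron,
    cI, cXX, cXY, cXZ, cXI, cYX, cYY, cYZ, cYI, cQX, cQY, cQZ, cQI,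
    cRX, cRY, cRZ, cRI, neg_kron, kron_neg, neg_neg, smul_neg]
  abel
end
end
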